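/- arXiv:2401.15601 — 2 statements merged into one kernel-verified Lean document; each statement's English description precedes it below -/
import Mathlib

section
/- With g_K := g_{i_K;K} (the i_K-th column of G_K) and assuming each rational number (g_K, d_{(j)}·c_j)_{D_0R} (1 ≤ j ≤ K) is an integer: q^{(K)}(x^{g_K}) = x^{g_K}·∏_{j=1}^{K} L_j^{−(g_K, d_{(j)}·c_j)_{D_0R}}. -/
noncomputable section

/-- Variables of the ambient field of a generalized cluster algebra of rank `n` with
mutation degrees `r`: cluster variables `x_i`, coefficients `y_i`, and `z_{i,s}` for
`1 ≤ s ≤ r_i - 1` (encoded by `Fin (r i - 1)`, the variable `z i t` standing for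
`z_{i, t+1}`). -/
inductive GVar (n : ℕ) (r : Fin n → ℕ) : Type where
  | x : Fin n → GVar n r
  | y : Fin n → GVar n r
  | z : (i : Fin n) → Fin (r i - 1) → GVar n r

/-- The ambient field: rational functions over `ℚ` in the variables `GVar n r`. -/
abbrev GF (n : ℕ) (r : Fin n → ℕ) : Type := FractionRing (MvPolynomial (GVar n r) ℚ)

/-- The variable `x_i` as an element of the field `GF n r`. -/
def Xv {n : ℕ} {r : Fin n → ℕ} (i : Fin n) : GF n r :=
  algebraMap (MvPolynomial (GVar n r) ℚ) (GF n r) (MvPolynomial.X (GVar.x i))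

/-- The variable `y_i` as an element of the field `GF n r`. -/
def Yv {n : ℕ} {r : Fin n → ℕ} (i : Fin n) : GF n r :=
  algebraMap (MvPolynomial (GVar n r) ℚ) (GF n r) (MvPolynomial.X (GVar.y i))

/-- The variable `z_{i,s+1}` (for `s : Fin (r i - 1)`) as an element of `GF n r`. -/
def Zv {n : ℕ} {r : Fin n → ℕ} (i : Fin n) (s : Fin (r i - 1)) : GF n r :=
  algebraMap (MvPolynomial (GVar n r) ℚ) (GF n r) (MvPolynomial.X (GVar.z i s))

/-- A rational constant as an element of `GF n r`. -/
def Qc {n : ℕ} {r : Fin n → ℕ} (a : ℚ) : GF n r :=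
  algebraMap (MvPolynomial (GVar n r) ℚ) (GF n r) (MvPolynomial.C a)

/-- `z_{i,s}` for `0 ≤ s ≤ r i`, with the convention `z_{i,0} = z_{i,r_i} = 1`. -/
def Zc {n : ℕ} (r : Fin n → ℕ) (i : Fin n) (s : ℕ) : GF n r :=
  if h : 0 < s ∧ s < r i then Zv i ⟨s - 1, by omega⟩ else 1

/-- `x^v = ∏ x_i^{v_i}` for `v ∈ ℤ^n`. -/
def xpow {n : ℕ} (r : Fin n → ℕ) (v : Fin n → ℤ) : GF n r :=
  ∏ i, Xv (r := r) i ^ v i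

/-- `ŷ_i = y_i·∏_j x_j^{b_{ji}}`. -/
def yhat {n : ℕ} (r : Fin n → ℕ) (B : Matrix (Fin n) (Fin n) ℤ) (i : Fin n) : GF n r :=
  Yv i * ∏ j, Xv (r := r) j ^ B j i

/-- `ŷ^v = ∏ ŷ_i^{v_i}` for `v ∈ ℤ^n`. -/
def yhatpow {n : ℕ} (r : Fin n → ℕ) (B : Matrix (Fin n) (Fin n) ℤ) (v : Fin n → ℤ) :
    GF n r :=
  ∏ i, yhat r B i ^ v i

/-!
Each `q_j` multiplies `x_i` by a power of `P_j`, so it multiplies every Laurent monomial in the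
`x`'s and `ŷ`'s by a power of `P_j` whose exponent is linear in the monomial; by induction,
`q^{(j)}` multiplies `x^{g_K}` and `ŷ^{c_l^+}` by products of the `q^{(i-1)}(P_i)`, `i ≤ j`, with
the exponents `-(g_K, d_{(i)} c_i)` and `-(ĉ_l^+, d_{(i)} c_i)`. As `q^{(l-1)}` fixes the `z`'s,
`q^{(l-1)}(P_l)` is `P_l` with `ŷ^{c_l^+}` replaced by its image, and strong induction on `l` turns
this into the recursion defining `L_l`: `q^{(l-1)}(P_l) = L_l`.

The `P_l`, hence the `L_l`, are nonzero: clearing the denominators of its Laurent monomials turns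
`P_l` into a polynomial whose value at the point with all coordinates `1` is `r_{i_l} + 1`.
-/

open Finset

section FieldEndomorphisms

variable {F : Type*} [Field F]

theorem zpow_sum₀ {ι : Type*} {a : F} (ha : a ≠ 0) (s : Finset ι) (f : ι → ℤ) :
    a ^ (∑ i ∈ s, f i) = ∏ i ∈ s, a ^ f i := by
  classical
  induction s using Finset.induction with
  | empty => simp
  | insert _ _ hi ih => rw [sum_insert hi, prod_insert hi, zpow_add₀ ha, ih]

theorem map_prod_zpow_eq_mul_zpow {ι : Type*} [Fintype ι] (f : F →+* F) {x : ι → F} {P : F}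
    (hP : P ≠ 0) {h : ι → ℤ} (hf : ∀ i, f (x i) = x i * P ^ h i) (v : ι → ℤ) :
    f (∏ i, x i ^ v i) = (∏ i, x i ^ v i) * P ^ ∑ i, v i * h i := by
  simp only [map_prod, map_zpow₀, hf, mul_zpow, ← zpow_mul, prod_mul_distrib,
    zpow_sum₀ hP, mul_comm (h _)]

variable (Q q : ℕ → F →+* F)

theorem apply_eq_mul_prod_of_comp {K : ℕ} (hQ0 : Q 0 = RingHom.id F)
    (hQ : ∀ j < K, Q (j + 1) = (Q j).comp (q (j + 1))) {P : ℕ → F} {a : ℕ → ℤ} {m : F}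
    (hm : ∀ j < K, q (j + 1) m = m * P (j + 1) ^ a (j + 1)) :
    Q K m = m * ∏ i ∈ Icc 1 K, Q (i - 1) (P i) ^ a i := by
  induction K with
  | zero => simp [hQ0]
  | succ K ih =>
    rw [hQ K K.lt_succ_self, RingHom.comp_apply, hm K K.lt_succ_self, map_mul, map_zpow₀,
      ih (fun j hj => hQ j (by omega)) (fun j hj => hm j (by omega)),
      prod_Icc_succ_top (by omega), Nat.add_sub_cancel, mul_assoc]

theorem apply_eq_self_of_comp {K : ℕ} (hQ0 : Q 0 = RingHom.id F)
    (hQ : ∀ j < K, Q (j + 1) = (Q j).comp (q (j + 1))) {m : F}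
    (hm : ∀ j < K, q (j + 1) m = m) : Q K m = m := by
  simpa using apply_eq_mul_prod_of_comp Q q hQ0 hQ (P := 1) (a := 0) (by simpa using hm)

end FieldEndomorphisms

theorem sum_mul_eq_of_mul_eq {ι : Type*} [Fintype ι] {d E : ℤ} (hd : d ≠ 0)
    {v h a b : ι → ℤ} (hh : ∀ m, h m * d = a m * b m) (hE : E * d = ∑ m, v m * a m * b m) :
    ∑ m, v m * h m = E := by
  refine mul_right_cancel₀ hd ?_
  simp only [hE, sum_mul, mul_assoc, hh]

section OneRatios

variable {A : Type*} (F : Type*) {K : Type*} [CommRing A] [Field F] [Algebra A F] [CommRing K]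
  (χ : A →+* K)

def oneRatios : Submonoid F where
  carrier := {t | ∃ u v, χ u = 1 ∧ χ v = 1 ∧ t = algebraMap A F u / algebraMap A F v}
  one_mem' := ⟨1, 1, map_one χ, map_one χ, by simp⟩
  mul_mem' := by
    rintro _ _ ⟨u, v, hu, hv, rfl⟩ ⟨u', v', hu', hv', rfl⟩
    exact ⟨u * u', v * v', by simp [hu, hu'], by simp [hv, hv'], by
      rw [div_mul_div_comm, map_mul, map_mul]⟩

variable {F χ}

theorem algebraMap_mem_oneRatios {u : A} (hu : χ u = 1) : algebraMap A F u ∈ oneRatios F χ :=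
  ⟨u, 1, hu, map_one χ, by simp⟩

theorem zpow_mem_oneRatios {t : F} (ht : t ∈ oneRatios F χ) (e : ℤ) :
    t ^ e ∈ oneRatios F χ := by
  have inv_mem : ∀ {s : F}, s ∈ oneRatios F χ → s⁻¹ ∈ oneRatios F χ := by
    rintro _ ⟨u, v, hu, hv, rfl⟩
    exact ⟨v, u, hv, hu, inv_div _ _⟩
  cases e with
  | ofNat k => simpa using pow_mem ht k
  | negSucc k => simpa using inv_mem (pow_mem ht (k + 1))

variable [Nontrivial K] [FaithfulSMul A F]

theorem exists_sum_eq_div_of_mem_oneRatios {ι : Type*} {s : Finset ι} {f : ι → F}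
    (hf : ∀ i ∈ s, f i ∈ oneRatios F χ) :
    ∃ u v, χ u = #s ∧ χ v = 1 ∧ ∑ i ∈ s, f i = algebraMap A F u / algebraMap A F v := by
  classical
  have algebraMap_ne_zero : ∀ {v : A}, χ v = 1 → algebraMap A F v ≠ 0 := fun hv h0 => by
    simp [(map_eq_zero_iff _ (FaithfulSMul.algebraMap_injective A F)).mp h0] at hv
  induction s using Finset.induction with
  | empty => exact ⟨0, 1, by simp, map_one χ, by simp⟩
  | insert i s hi ih =>
    obtain ⟨u, v, hu, hv, hsum⟩ := ih fun j hj => hf j (mem_insert_of_mem hj)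
    obtain ⟨u', v', hu', hv', hfi⟩ := hf i (mem_insert_self i s)
    refine ⟨u' * v + v' * u, v' * v, ?_, by simp [hv, hv'], ?_⟩
    · simp [hu, hv, hu', hv', card_insert_of_notMem hi, add_comm]
    · rw [sum_insert hi, hsum, hfi, div_add_div _ _ (algebraMap_ne_zero hv')
        (algebraMap_ne_zero hv)]
      simp

theorem sum_ne_zero_of_mem_oneRatios {ι : Type*} {s : Finset ι} {f : ι → F}
    (hf : ∀ i ∈ s, f i ∈ oneRatios F χ) (hs : (#s : K) ≠ 0) : ∑ i ∈ s, f i ≠ 0 := by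
  obtain ⟨u, v, hu, hv, hsum⟩ := exists_sum_eq_div_of_mem_oneRatios hf
  rw [hsum, div_ne_zero_iff, map_ne_zero_iff _ (FaithfulSMul.algebraMap_injective A F),
    map_ne_zero_iff _ (FaithfulSMul.algebraMap_injective A F)]
  exact ⟨fun h => hs (by rw [← hu, h, map_zero]), fun h => by simp [h] at hv⟩

end OneRatios

section GeneralizedClusterField

variable {n : ℕ} {r : Fin n → ℕ}

abbrev evalOne (n : ℕ) (r : Fin n → ℕ) : MvPolynomial (GVar n r) ℚ →+* ℚ :=
  MvPolynomial.eval fun _ => 1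

theorem algebraMap_X_mem_oneRatios (v : GVar n r) :
    algebraMap (MvPolynomial (GVar n r) ℚ) (GF n r) (MvPolynomial.X v) ∈
      oneRatios (GF n r) (evalOne n r) :=
  algebraMap_mem_oneRatios (MvPolynomial.eval_X _)

theorem yhatpow_mem_oneRatios (B : Matrix (Fin n) (Fin n) ℤ) (u : Fin n → ℤ) :
    yhatpow r B u ∈ oneRatios (GF n r) (evalOne n r) := by
  unfold yhatpow yhat
  have hX := algebraMap_X_mem_oneRatios (n := n) (r := r)
  exact prod_mem fun i _ => zpow_mem_oneRatios
    (mul_mem (hX _) (prod_mem fun j _ => zpow_mem_oneRatios (hX _) _)) _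

theorem Zc_mem_oneRatios (k : Fin n) (s : ℕ) : Zc r k s ∈ oneRatios (GF n r) (evalOne n r) := by
  unfold Zc
  split_ifs
  · exact algebraMap_X_mem_oneRatios _
  · exact one_mem _

def exchangePoly (r : Fin n → ℕ) (k : Fin n) (t : GF n r) : GF n r :=
  ∑ s ∈ range (r k + 1), Zc r k s * t ^ s

theorem exchangePoly_ne_zero (k : Fin n) {t : GF n r}
    (ht : t ∈ oneRatios (GF n r) (evalOne n r)) : exchangePoly r k t ≠ 0 :=
  sum_ne_zero_of_mem_oneRatios (χ := evalOne n r)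
    (fun s _ => mul_mem (Zc_mem_oneRatios k s) (pow_mem ht s))
    (by rw [card_range]; exact Nat.cast_ne_zero.mpr (r k).succ_ne_zero)

theorem map_exchangePoly (f : GF n r →+* GF n r) (hf : ∀ i s, f (Zv i s) = Zv i s)
    (k : Fin n) (t : GF n r) : f (exchangePoly r k t) = exchangePoly r k (f t) := by
  have hZc : ∀ s, f (Zc r k s) = Zc r k s := fun s => by
    unfold Zc
    split_ifs
    · exact hf _ _
    · exact map_one f
  simp only [exchangePoly, map_sum, map_mul, map_pow, hZc]

theorem map_yhatpow (f : GF n r →+* GF n r) {P : GF n r} (hP : P ≠ 0) {h : Fin n → ℤ}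
    (hy : ∀ i, f (Yv i) = Yv i) (hx : ∀ i, f (Xv i) = Xv i * P ^ h i)
    (B : Matrix (Fin n) (Fin n) ℤ) (u : Fin n → ℤ) :
    f (yhatpow r B u) = yhatpow r B u * P ^ ∑ m, B.mulVec u m * h m := by
  have hyhat : ∀ i, f (yhat r B i) = yhat r B i * P ^ ∑ m, B m i * h m := fun i => by
    rw [yhat, map_mul, hy, map_prod_zpow_eq_mul_zpow f hP hx, mul_assoc]
  rw [yhatpow, map_prod_zpow_eq_mul_zpow f hP hyhat]
  congr 2
  simp only [Matrix.mulVec, dotProduct, mul_sum, sum_mul]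
  rw [sum_comm]
  exact sum_congr rfl fun _ _ => sum_congr rfl fun _ _ => by ring

end GeneralizedClusterField

section MutationSequence

variable {n : ℕ} {r : Fin n → ℕ} (Q q : ℕ → GF n r →+* GF n r) {K : ℕ}

theorem comp_apply_xpow (hQ0 : Q 0 = RingHom.id _)
    (hQ : ∀ j < K, Q (j + 1) = (Q j).comp (q (j + 1))) {P : ℕ → GF n r}
    (hP : ∀ l, P l ≠ 0) {h : ℕ → Fin n → ℤ}
    (hqx : ∀ j < K, ∀ i, q (j + 1) (Xv i) = Xv i * P (j + 1) ^ (-h (j + 1) i))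
    (v : Fin n → ℤ) :
    Q K (xpow r v) = xpow r v * ∏ i ∈ Icc 1 K, Q (i - 1) (P i) ^ ∑ m, v m * -h i m :=
  apply_eq_mul_prod_of_comp Q q hQ0 hQ fun j hj =>
    map_prod_zpow_eq_mul_zpow _ (hP _) (hqx j hj) v

theorem comp_apply_yhatpow (hQ0 : Q 0 = RingHom.id _)
    (hQ : ∀ j < K, Q (j + 1) = (Q j).comp (q (j + 1))) {P : ℕ → GF n r}
    (hP : ∀ l, P l ≠ 0) {h : ℕ → Fin n → ℤ}
    (hqy : ∀ j < K, ∀ i, q (j + 1) (Yv i) = Yv i)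
    (hqx : ∀ j < K, ∀ i, q (j + 1) (Xv i) = Xv i * P (j + 1) ^ (-h (j + 1) i))
    (B : Matrix (Fin n) (Fin n) ℤ) (u : Fin n → ℤ) :
    Q K (yhatpow r B u) =
      yhatpow r B u * ∏ i ∈ Icc 1 K, Q (i - 1) (P i) ^ ∑ m, B.mulVec u m * -h i m :=
  apply_eq_mul_prod_of_comp Q q hQ0 hQ fun j hj =>
    map_yhatpow _ (hP _) (hqy j hj) (hqx j hj) B u

theorem comp_apply_exchangePoly_eq_of_recursion (hQ0 : Q 0 = RingHom.id _)
    (hQ : ∀ j < K, Q (j + 1) = (Q j).comp (q (j + 1))) (idx : ℕ → Fin n)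
    (B : Matrix (Fin n) (Fin n) ℤ) (w : ℕ → Fin n → ℤ) {h : ℕ → Fin n → ℤ}
    (hqy : ∀ j < K, ∀ i, q (j + 1) (Yv i) = Yv i)
    (hqz : ∀ j < K, ∀ i s, q (j + 1) (Zv i s) = Zv i s)
    (hqx : ∀ j < K, ∀ i, q (j + 1) (Xv i) =
      Xv i * exchangePoly r (idx (j + 1)) (yhatpow r B (w (j + 1))) ^ (-h (j + 1) i))
    {L : ℕ → GF n r} {a : ℕ → ℕ → ℤ}
    (hL : ∀ l, 1 ≤ l → l ≤ K → L l =
      exchangePoly r (idx l) (yhatpow r B (w l) * ∏ j ∈ Icc 1 (l - 1), L j ^ a l j))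
    (ha : ∀ l ≤ K, ∀ j, 1 ≤ j → j < l → ∑ m, B.mulVec (w l) m * -h j m = a l j)
    {l : ℕ} (hl : 1 ≤ l) (hlK : l ≤ K) :
    Q (l - 1) (exchangePoly r (idx l) (yhatpow r B (w l))) = L l := by
  have hP : ∀ j, exchangePoly r (idx j) (yhatpow r B (w j)) ≠ 0 :=
    fun j => exchangePoly_ne_zero _ (yhatpow_mem_oneRatios _ _)
  induction l using Nat.strong_induction_on with
  | _ l ih =>
    have hQz : ∀ i s, Q (l - 1) (Zv i s) = Zv i s := fun i s =>
      apply_eq_self_of_comp Q q hQ0 (fun j hj => hQ j (by omega))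
        fun j hj => hqz j (by omega) i s
    rw [map_exchangePoly _ hQz, comp_apply_yhatpow Q q hQ0 (fun j hj => hQ j (by omega)) hP
      (fun j hj => hqy j (by omega)) (fun j hj => hqx j (by omega)), hL l hl hlK]
    refine congrArg _ (congrArg _ (prod_congr rfl fun j hj => ?_))
    rw [mem_Icc] at hj
    rw [ih j (by omega) hj.1 (by omega), ha l hlK j hj.1 (by omega)]

end MutationSequence

theorem stmt_13_general (n K : ℕ) (r : Fin n → ℕ) (hr : ∀ i, 0 < r i)
    (B₀ : Matrix (Fin n) (Fin n) ℤ)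
    (D₀ : Fin n → ℤ) (hD₀ : ∀ i, 0 < D₀ i)
    (idx : ℕ → Fin n) (ε : ℕ → ℤ)
    (C G : ℕ → Matrix (Fin n) (Fin n) ℤ)
    -- the rational numbers h_{i,j} = (e_i, d_{(j)}·c_j)_{D₀R} are integers
    (hfun : ℕ → Fin n → ℤ)
    (hfunint : ∀ j < K, ∀ i,
      hfun (j + 1) i * (D₀ (idx (j + 1)) * (r (idx (j + 1)) : ℤ)) =
        D₀ i * (r i : ℤ) * C j i (idx (j + 1)))
    (q : ℕ → (GF n r →+* GF n r))
    (hqy : ∀ j < K, ∀ i, q (j + 1) (Yv i) = Yv i)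
    (hqz : ∀ j < K, ∀ i s, q (j + 1) (Zv i s) = Zv i s)
    (hqx : ∀ j < K, ∀ i, q (j + 1) (Xv i) =
      Xv i * (∑ s ∈ Finset.range (r (idx (j + 1)) + 1),
        Zc r (idx (j + 1)) s *
          yhatpow r B₀ (fun m => ε (j + 1) * C j m (idx (j + 1))) ^ s) ^ (-(hfun (j + 1) i)))
    (Q : ℕ → (GF n r →+* GF n r))
    (hQ0 : Q 0 = RingHom.id _)
    (hQ : ∀ j < K, Q (j + 1) = (Q j).comp (q (j + 1)))
    -- the rational numbers (ĉ_l⁺, d_{(j)}·c_j)_{D₀R} are integers `e l j`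
    (e : ℕ → ℕ → ℤ)
    (he : ∀ l, 1 ≤ l → l ≤ K → ∀ j, 1 ≤ j → j ≤ l →
      e l j * (D₀ (idx j) * (r (idx j) : ℤ)) =
        ∑ m, B₀.mulVec (fun i => ε l * C (l - 1) i (idx l)) m *
          (D₀ m * (r m : ℤ)) * C (j - 1) m (idx j))
    (L : ℕ → GF n r)
    (hL1 : L 1 = ∑ s ∈ Finset.range (r (idx 1) + 1),
      Zc r (idx 1) s * yhatpow r B₀ (fun i => ε 1 * C 0 i (idx 1)) ^ s)
    (hLl : ∀ l, 2 ≤ l → l ≤ K → L l = ∑ s ∈ Finset.range (r (idx l) + 1),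
      Zc r (idx l) s * (yhatpow r B₀ (fun i => ε l * C (l - 1) i (idx l)) *
        ∏ j ∈ Finset.Icc 1 (l - 1), L j ^ (-(e l j))) ^ s)
    -- the rational numbers (g_K, d_{(j)}·c_j)_{D₀R} are integers `hg j`
    (hg : ℕ → ℤ)
    (hgint : ∀ j, 1 ≤ j → j ≤ K →
      hg j * (D₀ (idx j) * (r (idx j) : ℤ)) =
        ∑ m, G K m (idx K) * (D₀ m * (r m : ℤ)) * C (j - 1) m (idx j))
    : (∀ j, 1 ≤ j → j ≤ K → L j ≠ 0) ∧
    Q K (xpow r (fun m => G K m (idx K))) =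
      xpow r (fun m => G K m (idx K)) * ∏ j ∈ Finset.Icc 1 K, L j ^ (-(hg j)) := by
  set P : ℕ → GF n r := fun l =>
    exchangePoly r (idx l) (yhatpow r B₀ fun m => ε l * C (l - 1) m (idx l)) with hPdef
  have hqx' : ∀ j < K, ∀ i, q (j + 1) (Xv i) = Xv i * P (j + 1) ^ (-hfun (j + 1) i) := by
    simpa only [hPdef, exchangePoly, Nat.add_sub_cancel] using hqx
  have hL : ∀ l, 1 ≤ l → l ≤ K → L l = exchangePoly r (idx l)
      ((yhatpow r B₀ fun m => ε l * C (l - 1) m (idx l)) *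
        ∏ j ∈ Icc 1 (l - 1), L j ^ (-e l j)) := by
    intro l hl hlK
    rcases (show l = 1 ∨ 2 ≤ l by omega) with rfl | hl2
    · simpa [exchangePoly] using hL1
    · exact hLl l hl2 hlK
  -- `∑ m, v m * hfun j m` is the pairing `(v, d_{(j)}·c_j)_{D₀R}`, so it equals its integer name
  have hexp : ∀ j, 1 ≤ j → j ≤ K → ∀ (v : Fin n → ℤ) (E : ℤ),
      E * (D₀ (idx j) * r (idx j)) = ∑ m, v m * (D₀ m * r m) * C (j - 1) m (idx j) →
      ∑ m, v m * -hfun j m = -E := by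
    rintro (_ | j) hj hjK v E hE
    · omega
    have hd : D₀ (idx (j + 1)) * (r (idx (j + 1)) : ℤ) ≠ 0 :=
      (mul_pos (hD₀ _) (by exact_mod_cast hr _)).ne'
    rw [← sum_mul_eq_of_mul_eq hd (hfunint j hjK) hE]
    simp only [mul_neg, sum_neg_distrib]
  have hQP : ∀ l, 1 ≤ l → l ≤ K → Q (l - 1) (P l) = L l := fun l hl hlK =>
    comp_apply_exchangePoly_eq_of_recursion Q q hQ0 hQ idx B₀
      (fun l m => ε l * C (l - 1) m (idx l)) hqy hqz hqx' hL
      (fun l hlK j hj hjl => hexp j hj (by omega) _ _ (he l (by omega) hlK j hj hjl.le)) hl hlK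
  have hP : ∀ l, P l ≠ 0 := fun l => exchangePoly_ne_zero _ (yhatpow_mem_oneRatios _ _)
  refine ⟨fun j hj hjK => hQP j hj hjK ▸ (map_ne_zero _).mpr (hP j), ?_⟩
  rw [comp_apply_xpow Q q hQ0 hQ hP hqx']
  refine congrArg _ (prod_congr rfl fun j hj => ?_)
  rw [mem_Icc] at hj
  rw [hQP j hj.1 hj.2, hexp j hj.1 hj.2 _ _ (hgint j hj.1 hj.2)]

/-- With `g_K = g_{i_K;K}` and the integers `hg j`, representing
`(g_K, d_{(j)}·c_j)_{D₀R}`, the elements `L_j` are nonzero and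
`q^{(K)}(x^{g_K}) = x^{g_K}·∏_{j=1}^{K} L_j^{-(g_K, d_{(j)}·c_j)_{D₀R}}`. -/
theorem stmt_13 (n K : ℕ) (hn : 1 ≤ n) (r : Fin n → ℕ) (hr : ∀ i, 0 < r i)
    (B₀ : Matrix (Fin n) (Fin n) ℤ)
    (D₀ : Fin n → ℤ) (hD₀ : ∀ i, 0 < D₀ i)
    (hskew : ∀ i j, D₀ i * (r i : ℤ) * B₀ i j = -(D₀ j * (r j : ℤ) * B₀ j i))
    (idx : ℕ → Fin n) (ε : ℕ → ℤ)
    (hε : ∀ j < K, ε (j + 1) = 1 ∨ ε (j + 1) = -1)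
    (B C G : ℕ → Matrix (Fin n) (Fin n) ℤ)
    (hB0 : B 0 = B₀) (hC0 : C 0 = 1) (hG0 : G 0 = 1)
    -- at each step the c-vector is nonzero and sign-coherent with common sign ε_j
    (hcv : ∀ j < K, (∃ l, C j l (idx (j + 1)) ≠ 0) ∧
      ∀ l, 0 ≤ ε (j + 1) * C j l (idx (j + 1)))
    (hB : ∀ j < K, ∀ (a b : Fin n),
      B (j + 1) a b =
        if a = idx (j + 1) ∨ b = idx (j + 1) then -(B j a b)
        else B j a b + (r (idx (j + 1)) : ℤ) *
          (max (-(B j a (idx (j + 1)))) 0 * B j (idx (j + 1)) b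
            + B j a (idx (j + 1)) * max (B j (idx (j + 1)) b) 0))
    (hC : ∀ j < K, ∀ (a b : Fin n),
      C (j + 1) a b =
        if b = idx (j + 1) then -(C j a b)
        else C j a b + (r (idx (j + 1)) : ℤ) *
          (C j a (idx (j + 1)) * max (ε (j + 1) * B j (idx (j + 1)) b) 0
            + max (-(ε (j + 1) * C j a (idx (j + 1)))) 0 * B j (idx (j + 1)) b))
    (hG : ∀ j < K, ∀ (l i : Fin n),
      G (j + 1) l i =
        if i = idx (j + 1) then
          -(G j l i) + (r (idx (j + 1)) : ℤ) *
            ∑ p, max (-(ε (j + 1) * B j p (idx (j + 1)))) 0 * G j l p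
        else G j l i)
    -- the rational numbers h_{i,j} = (e_i, d_{(j)}·c_j)_{D₀R} are integers
    (hfun : ℕ → Fin n → ℤ)
    (hfunint : ∀ j < K, ∀ i,
      hfun (j + 1) i * (D₀ (idx (j + 1)) * (r (idx (j + 1)) : ℤ)) =
        D₀ i * (r i : ℤ) * C j i (idx (j + 1)))
    (q : ℕ → (GF n r →+* GF n r))
    (hq0 : ∀ j < K, ∀ a : ℚ, q (j + 1) (Qc a) = Qc a)
    (hqy : ∀ j < K, ∀ i, q (j + 1) (Yv i) = Yv i)
    (hqz : ∀ j < K, ∀ i s, q (j + 1) (Zv i s) = Zv i s)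
    (hqx : ∀ j < K, ∀ i, q (j + 1) (Xv i) =
      Xv i * (∑ s ∈ Finset.range (r (idx (j + 1)) + 1),
        Zc r (idx (j + 1)) s *
          yhatpow r B₀ (fun m => ε (j + 1) * C j m (idx (j + 1))) ^ s) ^ (-(hfun (j + 1) i)))
    (Q : ℕ → (GF n r →+* GF n r))
    (hQ0 : Q 0 = RingHom.id _)
    (hQ : ∀ j < K, Q (j + 1) = (Q j).comp (q (j + 1)))
    -- the rational numbers (ĉ_l⁺, d_{(j)}·c_j)_{D₀R} are integers `e l j`
    (e : ℕ → ℕ → ℤ)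
    (he : ∀ l, 1 ≤ l → l ≤ K → ∀ j, 1 ≤ j → j ≤ l →
      e l j * (D₀ (idx j) * (r (idx j) : ℤ)) =
        ∑ m, B₀.mulVec (fun i => ε l * C (l - 1) i (idx l)) m *
          (D₀ m * (r m : ℤ)) * C (j - 1) m (idx j))
    (L : ℕ → GF n r)
    (hL1 : L 1 = ∑ s ∈ Finset.range (r (idx 1) + 1),
      Zc r (idx 1) s * yhatpow r B₀ (fun i => ε 1 * C 0 i (idx 1)) ^ s)
    (hLl : ∀ l, 2 ≤ l → l ≤ K → L l = ∑ s ∈ Finset.range (r (idx l) + 1),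
      Zc r (idx l) s * (yhatpow r B₀ (fun i => ε l * C (l - 1) i (idx l)) *
        ∏ j ∈ Finset.Icc 1 (l - 1), L j ^ (-(e l j))) ^ s)
    -- the rational numbers (g_K, d_{(j)}·c_j)_{D₀R} are integers `hg j`
    (hK : 1 ≤ K) (hg : ℕ → ℤ)
    (hgint : ∀ j, 1 ≤ j → j ≤ K →
      hg j * (D₀ (idx j) * (r (idx j) : ℤ)) =
        ∑ m, G K m (idx K) * (D₀ m * (r m : ℤ)) * C (j - 1) m (idx j))
    : (∀ j, 1 ≤ j → j ≤ K → L j ≠ 0) ∧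
    Q K (xpow r (fun m => G K m (idx K))) =
      xpow r (fun m => G K m (idx K)) * ∏ j ∈ Finset.Icc 1 K, L j ^ (-(hg j)) :=
  stmt_13_general n K r hr B₀ D₀ hD₀ idx ε C G hfun hfunint q hqy hqz hqx Q hQ0 hQ e he L hL1 hLl hg
    hgint
end
end

section
/- Gupta's formula for generalized cluster algebras: with g_K := g_{i_K;K} (the i_K-th column of G_K) and assuming each rational number (g_K, d_{(j)}·c_j)_{D_0R} (1 ≤ j ≤ K) is an integer, the cluster variable x_{i_K;t_K} of the generalized cluster algebra with principal coefficients, expressed in the initial variables as μ^{(K)}(x_{i_K}) ∈ F, satisfies μ^{(K)}(x_{i_K}) = x^{g_K}·∏_{j=1}^{K} L_j^{−(g_K, d_{(j)}·c_j)_{D_0R}}. Equivalently, its F-polynomial evaluated at (ŷ, z) equals ∏_{j=1}^{K} L_j^{−(g_K, d_{(j)}·c_j)_{D_0R}}. -/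
/-!
Induct along the mutation sequence, proving for every time `t` and every `i` that
`μ^{(t)}(x_i) = x^{g_{i;t}} ∏_{j ≤ t} L_j^{-(g_{i;t}, d_{(j)} c_j)}`. The right-hand side is
multiplicative in the exponent vector `g`, so `μ^{(t)}` sends every monomial `x^w` to the same
expression for `G_t w`. Applied to the exchange relation of `x_k` at step `t + 1`, the identity
`G_t B_t = B₀ C_t` (from `E_ε μ_k(B_t) = B_t F_ε` and sign-coherence) turns the image of `Ŷ` into
`ŷ^{c}` times a product of the `L_j`, so the image of the exchange polynomial is exactly `L_{t+1}`,
while the monomial factor becomes the one of `g_{k;t+1}`. Tropical duality gives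
`(g_{i;t+1}, d_{(t+1)} c_{t+1}) = -δ_{ik}`, which accounts for the new factor `L_{t+1}`.
-/

noncomputable section

open Finset
open scoped Matrix

section Mutation

variable {n : ℕ}

def IsSkewSymmetrizedBy (W : Fin n → ℤ) (B : Matrix (Fin n) (Fin n) ℤ) : Prop :=
  ∀ i j, W i * B i j = -(W j * B j i)

def mutate (ρ : ℤ) (k : Fin n) (B : Matrix (Fin n) (Fin n) ℤ) : Matrix (Fin n) (Fin n) ℤ :=
  Matrix.of fun a b => if a = k ∨ b = k then -B a b
    else B a b + ρ * (max (-B a k) 0 * B k b + B a k * max (B k b) 0)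

/- The mutation matrices `J_k`, `E_ε`, `F_ε` of Nakanishi–Zelevinsky, with `[·]_+` scaled by
`ρ = r_k`: g-vectors mutate as `G ↦ G E_ε`, sign-coherent c-vectors as `C ↦ C F_ε`. -/
def mutJ (k : Fin n) : Matrix (Fin n) (Fin n) ℤ :=
  Matrix.diagonal fun i => if i = k then -1 else 1

def mutE (ρ ε : ℤ) (k : Fin n) (B : Matrix (Fin n) (Fin n) ℤ) : Matrix (Fin n) (Fin n) ℤ :=
  mutJ k + Matrix.of fun a b => if b = k then ρ * max (-(ε * B a k)) 0 else 0

def mutF (ρ ε : ℤ) (k : Fin n) (B : Matrix (Fin n) (Fin n) ℤ) : Matrix (Fin n) (Fin n) ℤ :=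
  mutJ k + Matrix.of fun a b => if a = k then ρ * max (ε * B k b) 0 else 0

lemma max_neg_mul_add_mul_max_of_sign {ε : ℤ} (hε : ε = 1 ∨ ε = -1) (x y : ℤ) :
    max (-(ε * x)) 0 * y + x * max (ε * y) 0 = max (-x) 0 * y + x * max y 0 := by
  rcases hε with rfl | rfl
  · simp
  · have hx : max x 0 = x + max (-x) 0 := by omega
    have hy : max (-y) 0 = max y 0 - y := by omega
    simp only [neg_mul, one_mul, neg_neg, hx, hy]
    ring

lemma IsSkewSymmetrizedBy.apply_self_eq_zero {W : Fin n → ℤ} {B : Matrix (Fin n) (Fin n) ℤ}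
    (hB : IsSkewSymmetrizedBy W B) {i : Fin n} (hW : W i ≠ 0) : B i i = 0 := by
  have h := hB i i
  exact (mul_eq_zero.1 (by linarith : W i * B i i = 0)).resolve_left hW

lemma isSkewSymmetrizedBy_mutate {W : Fin n → ℤ} {B : Matrix (Fin n) (Fin n) ℤ}
    (hB : IsSkewSymmetrizedBy W B) (hW : ∀ i, 0 ≤ W i) (ρ : ℤ) (k : Fin n) :
    IsSkewSymmetrizedBy W (mutate ρ k B) := by
  have hmax : ∀ i, W i * max (-B i k) 0 = W k * max (B k i) 0 := fun i => by
    rw [mul_max_of_nonneg _ _ (hW i), mul_max_of_nonneg _ _ (hW k), hB k i]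
    simp
  intro i j
  simp only [mutate, Matrix.of_apply]
  by_cases h : i = k ∨ j = k
  · rw [if_pos h, if_pos h.symm, mul_neg, mul_neg, hB i j]
  · rw [if_neg h, if_neg (by tauto)]
    linear_combination hB i j + ρ * B k j * hmax i + ρ * max (B k j) 0 * hB i k
      + ρ * B k i * hmax j + ρ * max (B k i) 0 * hB j k

lemma mul_mutE_apply (ρ ε : ℤ) (k : Fin n) (B X : Matrix (Fin n) (Fin n) ℤ) (a b : Fin n) :
    (X * mutE ρ ε k B) a b =
      if b = k then -X a b + ρ * ∑ p, max (-(ε * B p k)) 0 * X a p else X a b := by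
  rw [mutE, mutJ, Matrix.mul_add, Matrix.add_apply, Matrix.mul_diagonal, Matrix.mul_apply]
  split_ifs with h
  · simp [h, Finset.mul_sum, mul_comm, mul_left_comm]
  · simp [h]

lemma mul_mutF_apply (ρ ε : ℤ) (k : Fin n) (B X : Matrix (Fin n) (Fin n) ℤ) (a b : Fin n) :
    (X * mutF ρ ε k B) a b =
      (if b = k then -X a b else X a b) + X a k * (ρ * max (ε * B k b) 0) := by
  rw [mutF, mutJ, Matrix.mul_add, Matrix.add_apply, Matrix.mul_diagonal, Matrix.mul_apply]
  simp

lemma mutE_mul_apply (ρ ε : ℤ) (k : Fin n) (B Y : Matrix (Fin n) (Fin n) ℤ) (a b : Fin n) :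
    (mutE ρ ε k B * Y) a b =
      (if a = k then -Y a b else Y a b) + ρ * max (-(ε * B a k)) 0 * Y k b := by
  rw [mutE, mutJ, Matrix.add_mul, Matrix.add_apply, Matrix.diagonal_mul, Matrix.mul_apply]
  simp

lemma mutE_mul_mutate {ε : ℤ} (hε : ε = 1 ∨ ε = -1) (ρ : ℤ) {k : Fin n}
    {B : Matrix (Fin n) (Fin n) ℤ} (hkk : B k k = 0) :
    mutE ρ ε k B * mutate ρ k B = B * mutF ρ ε k B := by
  ext a b
  rw [mutE_mul_apply, mul_mutF_apply]
  simp only [mutate, Matrix.of_apply]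
  have := max_neg_mul_add_mul_max_of_sign hε (B a k) (B k b)
  by_cases ha : a = k <;> by_cases hb : b = k
  · subst ha hb; simp [hkk]
  · subst ha; simp [hb, hkk]
  · subst hb; simp [ha, hkk]
  · simp only [ha, hb, or_self, true_or, if_true, if_false]
    linear_combination (-ρ) * this

lemma eq_mul_mutF_of_signCoherent {ρ ε : ℤ} {k : Fin n} {B C C' : Matrix (Fin n) (Fin n) ℤ}
    (hkk : B k k = 0) (hsc : ∀ l, 0 ≤ ε * C l k)
    (hC' : ∀ a b, C' a b = if b = k then -C a b
      else C a b + ρ * (C a k * max (ε * B k b) 0 + max (-(ε * C a k)) 0 * B k b)) :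
    C' = C * mutF ρ ε k B := by
  ext a b
  have hzero : max (-(ε * C a k)) 0 = 0 := max_eq_right (by linarith [hsc a])
  rw [hC', mul_mutF_apply]
  split_ifs with hb
  · subst hb; simp [hkk]
  · rw [hzero]; ring

end Mutation

section Monomials

variable {n : ℕ} {r : Fin n → ℕ}

lemma Xv_ne_zero (i : Fin n) : (Xv i : GF n r) ≠ 0 := by
  simp [Xv, MvPolynomial.X_ne_zero]

lemma prod_zpow_add₀ {ι G₀ : Type*} [CommGroupWithZero G₀] {s : Finset ι} {a : ι → G₀}
    (ha : ∀ i ∈ s, a i ≠ 0) (u v : ι → ℤ) :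
    ∏ i ∈ s, a i ^ (u i + v i) = (∏ i ∈ s, a i ^ u i) * ∏ i ∈ s, a i ^ v i := by
  rw [← prod_mul_distrib]
  exact prod_congr rfl fun i hi => zpow_add₀ (ha i hi) _ _

lemma prod_zpow_mul_left {ι G : Type*} [DivisionCommMonoid G] (s : Finset ι) (a : ι → G)
    (c : ℤ) (u : ι → ℤ) : ∏ i ∈ s, a i ^ (c * u i) = (∏ i ∈ s, a i ^ u i) ^ c := by
  rw [← prod_zpow]
  exact prod_congr rfl fun i _ => by rw [mul_comm, _root_.zpow_mul]

lemma prod_zpow_eq_zpow_sum₀ {ι G₀ : Type*} [CommGroupWithZero G₀] (s : Finset ι) {a : G₀}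
    (ha : a ≠ 0) (f : ι → ℤ) : ∏ i ∈ s, a ^ f i = a ^ ∑ i ∈ s, f i := by
  induction s using Finset.cons_induction with
  | empty => simp
  | cons i s hi ih => rw [prod_cons, sum_cons, ih, zpow_add₀ ha]

lemma yhatpow_eq (B₀ : Matrix (Fin n) (Fin n) ℤ) (v : Fin n → ℤ) :
    yhatpow r B₀ v = (∏ i, Yv i ^ v i) * xpow r (B₀ *ᵥ v) := by
  simp only [yhatpow, yhat, mul_zpow, prod_mul_distrib, xpow, ← prod_zpow, ← zpow_mul,
    Matrix.mulVec, dotProduct]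
  rw [prod_comm]
  congr 1
  exact prod_congr rfl fun j _ => prod_zpow_eq_zpow_sum₀ _ (Xv_ne_zero j) _

/- With `h j` standing for `D₀ R d_{(j)} c_j` (so `v ⬝ᵥ h j = (v, d_{(j)} c_j)_{D₀R}`),
`guptaMonomial (Icc 1 t) L h g` is the right-hand side of Gupta's formula at time `t`. -/
def guptaMonomial (s : Finset ℕ) (L : ℕ → GF n r) (h : ℕ → Fin n → ℤ) (v : Fin n → ℤ) :
    GF n r :=
  xpow r v * ∏ j ∈ s, L j ^ (-(v ⬝ᵥ h j))

variable {s : Finset ℕ} {L : ℕ → GF n r} {h : ℕ → Fin n → ℤ}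

lemma guptaMonomial_zero : guptaMonomial s L h 0 = 1 := by
  simp [guptaMonomial, xpow]

lemma guptaMonomial_add (hL : ∀ j ∈ s, L j ≠ 0) (u v : Fin n → ℤ) :
    guptaMonomial s L h (u + v) = guptaMonomial s L h u * guptaMonomial s L h v := by
  simp only [guptaMonomial, xpow, Pi.add_apply, add_dotProduct, neg_add]
  rw [prod_zpow_add₀ (fun i _ => Xv_ne_zero i), prod_zpow_add₀ hL]
  ring

lemma guptaMonomial_zsmul (c : ℤ) (v : Fin n → ℤ) :
    guptaMonomial s L h (c • v) = guptaMonomial s L h v ^ c := by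
  simp only [guptaMonomial, xpow, Pi.smul_apply, smul_eq_mul, smul_dotProduct, ← mul_neg,
    prod_zpow_mul_left, mul_zpow]

lemma guptaMonomial_neg (v : Fin n → ℤ) :
    guptaMonomial s L h (-v) = (guptaMonomial s L h v)⁻¹ := by
  rw [← neg_one_zsmul, guptaMonomial_zsmul, _root_.zpow_neg_one]

lemma guptaMonomial_sum (hL : ∀ j ∈ s, L j ≠ 0) {ι : Type*} (t : Finset ι) (v : ι → Fin n → ℤ) :
    guptaMonomial s L h (∑ l ∈ t, v l) = ∏ l ∈ t, guptaMonomial s L h (v l) := by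
  classical
  induction t using Finset.induction_on with
  | empty => exact guptaMonomial_zero
  | insert a t ha ih => rw [sum_insert ha, prod_insert ha, guptaMonomial_add hL, ih]

lemma prod_guptaMonomial_zpow (hL : ∀ j ∈ s, L j ≠ 0) (G : Matrix (Fin n) (Fin n) ℤ)
    (w : Fin n → ℤ) :
    ∏ l, guptaMonomial s L h (fun m => G m l) ^ w l = guptaMonomial s L h (G *ᵥ w) := by
  have hcols : G *ᵥ w = ∑ l, w l • fun m => G m l := by
    ext m
    simp [Matrix.mulVec, dotProduct, mul_comm]
  simp only [hcols, guptaMonomial_sum hL, guptaMonomial_zsmul]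

lemma guptaMonomial_Icc_succ (t : ℕ) (v : Fin n → ℤ) :
    guptaMonomial (Icc 1 (t + 1)) L h v =
      guptaMonomial (Icc 1 t) L h v * L (t + 1) ^ (-(v ⬝ᵥ h (t + 1))) := by
  rw [guptaMonomial, guptaMonomial, prod_Icc_succ_top (by omega), mul_assoc]

end Monomials

section Exchange

variable {n : ℕ} {r : Fin n → ℕ}

def exchangePolynomial (r : Fin n → ℕ) (k : Fin n) (u : GF n r) : GF n r :=
  ∑ s ∈ range (r k + 1), Zc r k s * u ^ s

lemma sum_Zc_mul_zpow_mul (k : Fin n) (u : GF n r) (ε : ℤ) :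
    ∑ s ∈ range (r k + 1), Zc r k s * u ^ (ε * (s : ℤ)) = exchangePolynomial r k (u ^ ε) := by
  simp only [exchangePolynomial, _root_.zpow_mul, zpow_natCast]

lemma map_exchangePolynomial (f : GF n r →+* GF n r) {k : Fin n}
    (hf : ∀ s, f (Zc r k s) = Zc r k s) (u : GF n r) :
    f (exchangePolynomial r k u) = exchangePolynomial r k (f u) := by
  simp only [exchangePolynomial, map_sum, map_mul, map_pow, hf]

variable {s : Finset ℕ} {L : ℕ → GF n r} {h : ℕ → Fin n → ℤ}

lemma map_xpow {f : GF n r →+* GF n r} {G : Matrix (Fin n) (Fin n) ℤ} (hL : ∀ j ∈ s, L j ≠ 0)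
    (hf : ∀ i, f (Xv i) = guptaMonomial s L h (fun m => G m i)) (w : Fin n → ℤ) :
    f (xpow r w) = guptaMonomial s L h (G *ᵥ w) := by
  simp only [xpow, map_prod, map_zpow₀, hf, prod_guptaMonomial_zpow hL]

lemma yMonomial_mul_guptaMonomial_zpow (B₀ : Matrix (Fin n) (Fin n) ℤ) (c : Fin n → ℤ) (ε : ℤ) :
    ((∏ l, Yv l ^ c l) * guptaMonomial s L h (B₀ *ᵥ c)) ^ ε =
      (∏ l, Yv l ^ (ε * c l)) * guptaMonomial s L h (B₀ *ᵥ fun l => ε * c l) := by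
  rw [mul_zpow, prod_zpow_mul_left, ← guptaMonomial_zsmul, ← Matrix.mulVec_smul]
  rfl

lemma map_exchange_relation {f : GF n r →+* GF n r} {G B C B₀ : Matrix (Fin n) (Fin n) ℤ}
    {k : Fin n} {ρ : ℕ} {ε : ℤ} (hL : ∀ j ∈ s, L j ≠ 0)
    (hfx : ∀ i, f (Xv i) = guptaMonomial s L h (fun m => G m i))
    (hfy : ∀ i, f (Yv i) = Yv i) (hfz : ∀ s, f (Zc r k s) = Zc r k s)
    (hGB : G * B = B₀ * C) :
    f ((Xv k)⁻¹ * (∏ l, Xv l ^ max (-(ε * B l k)) 0) ^ ρ *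
        ∑ s ∈ range (r k + 1), Zc r k s *
          ((∏ l, Yv l ^ C l k) * ∏ l, Xv l ^ B l k) ^ (ε * (s : ℤ))) =
      guptaMonomial s L h
          (-(fun m => G m k) + (ρ : ℤ) • G *ᵥ fun l => max (-(ε * B l k)) 0) *
        exchangePolynomial r k
          ((∏ l, Yv l ^ (ε * C l k)) * guptaMonomial s L h (B₀ *ᵥ fun l => ε * C l k)) := by
  have hcol : G *ᵥ (fun l => B l k) = B₀ *ᵥ fun l => C l k :=
    funext fun a => congrFun (congrFun hGB a) k
  have hY : f ((∏ l, Yv l ^ C l k) * ∏ l, Xv l ^ B l k) =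
      (∏ l, Yv l ^ C l k) * guptaMonomial s L h (B₀ *ᵥ fun l => C l k) := by
    rw [map_mul, ← xpow, map_xpow hL hfx, hcol]
    simp only [map_prod, map_zpow₀, hfy]
  rw [sum_Zc_mul_zpow_mul, map_mul, map_exchangePolynomial f hfz, map_zpow₀, hY,
    yMonomial_mul_guptaMonomial_zpow, map_mul, map_inv₀, map_pow, ← xpow, map_xpow hL hfx, hfx,
    guptaMonomial_add hL, guptaMonomial_neg, guptaMonomial_zsmul, zpow_natCast]

end Exchange

section Sequences

variable {n K : ℕ} {idx : ℕ → Fin n} {ε ρ : ℕ → ℤ}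

lemma isSkewSymmetrizedBy_of_mutations {W : Fin n → ℤ} (hW : ∀ i, 0 ≤ W i)
    {B : ℕ → Matrix (Fin n) (Fin n) ℤ} (h0 : IsSkewSymmetrizedBy W (B 0))
    (hB : ∀ j < K, B (j + 1) = mutate (ρ (j + 1)) (idx (j + 1)) (B j)) :
    ∀ t ≤ K, IsSkewSymmetrizedBy W (B t) := by
  intro t
  induction t with
  | zero => exact fun _ => h0
  | succ t ih =>
    intro ht
    rw [hB t ht]
    exact isSkewSymmetrizedBy_mutate (ih (by omega)) hW _ _

lemma mul_eq_mul_of_mutations {W : Fin n → ℤ} (hW : ∀ i, 0 < W i)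
    {B C G : ℕ → Matrix (Fin n) (Fin n) ℤ} {B₀ : Matrix (Fin n) (Fin n) ℤ}
    (hskew : IsSkewSymmetrizedBy W (B 0)) (h0 : G 0 * B 0 = B₀ * C 0)
    (hε : ∀ j < K, ε (j + 1) = 1 ∨ ε (j + 1) = -1)
    (hsc : ∀ j < K, ∀ l, 0 ≤ ε (j + 1) * C j l (idx (j + 1)))
    (hB : ∀ j < K, B (j + 1) = mutate (ρ (j + 1)) (idx (j + 1)) (B j))
    (hC : ∀ j < K, ∀ a b, C (j + 1) a b = if b = idx (j + 1) then -C j a b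
      else C j a b + ρ (j + 1) * (C j a (idx (j + 1)) * max (ε (j + 1) * B j (idx (j + 1)) b) 0
        + max (-(ε (j + 1) * C j a (idx (j + 1)))) 0 * B j (idx (j + 1)) b))
    (hG : ∀ j < K, G (j + 1) = G j * mutE (ρ (j + 1)) (ε (j + 1)) (idx (j + 1)) (B j)) :
    ∀ t ≤ K, G t * B t = B₀ * C t := by
  have hkk : ∀ t < K, B t (idx (t + 1)) (idx (t + 1)) = 0 := fun t ht =>
    (isSkewSymmetrizedBy_of_mutations (fun i => (hW i).le) hskew hB t ht.le).apply_self_eq_zero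
      (hW _).ne'
  intro t
  induction t with
  | zero => exact fun _ => h0
  | succ t ih =>
    intro ht
    rw [hG t ht, hB t ht, eq_mul_mutF_of_signCoherent (hkk t ht) (hsc t ht) (hC t ht),
      Matrix.mul_assoc, mutE_mul_mutate (hε t ht) _ (hkk t ht), ← Matrix.mul_assoc,
      ih (by omega), Matrix.mul_assoc]

lemma map_eq_self_of_comp {R : Type*} [Semiring R] {M μ : ℕ → (R →+* R)}
    (hM0 : M 0 = RingHom.id R) (hM : ∀ j < K, M (j + 1) = (M j).comp (μ (j + 1)))
    {a : R} (hμ : ∀ j < K, μ (j + 1) a = a) : ∀ t ≤ K, M t a = a := by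
  intro t
  induction t with
  | zero => simp [hM0]
  | succ t ih => intro ht; rw [hM t ht, RingHom.comp_apply, hμ t ht, ih (by omega)]

lemma map_Zc {r : Fin n → ℕ} {f : GF n r →+* GF n r} (hf : ∀ i s, f (Zv i s) = Zv i s)
    (i : Fin n) (s : ℕ) : f (Zc r i s) = Zc r i s := by
  unfold Zc
  split <;> simp [hf]

lemma dotProduct_eq_of_mul_eq {ι : Type*} [Fintype ι] {W : ι → ℤ} {k : ι} (hW : W k ≠ 0)
    {h c v : ι → ℤ} (hh : ∀ m, h m * W k = W m * c m) {a : ℤ} (ha : a * W k = ∑ m, v m * W m * c m) :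
    v ⬝ᵥ h = a := by
  refine mul_right_cancel₀ hW (ha ▸ ?_)
  simp only [dotProduct, sum_mul, mul_assoc, hh]

end Sequences

section Gupta

variable {n K : ℕ} {r : Fin n → ℕ} {idx : ℕ → Fin n} {ε : ℕ → ℤ} {W : Fin n → ℤ}
  {B C G : ℕ → Matrix (Fin n) (Fin n) ℤ} {B₀ : Matrix (Fin n) (Fin n) ℤ}
  {hfun : ℕ → Fin n → ℤ} {L : ℕ → GF n r}

lemma dotProduct_hfun_eq (hW : ∀ i, W i ≠ 0)
    (hfunint : ∀ j < K, ∀ i, hfun (j + 1) i * W (idx (j + 1)) = W i * C j i (idx (j + 1)))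
    {j : ℕ} (hj : j ∈ Icc 1 K) {v : Fin n → ℤ} {a : ℤ}
    (ha : a * W (idx j) = ∑ m, v m * W m * C (j - 1) m (idx j)) : v ⬝ᵥ hfun j = a := by
  obtain ⟨j, rfl⟩ : ∃ j', j = j' + 1 := ⟨j - 1, by grind⟩
  exact dotProduct_eq_of_mul_eq (hW _) (hfunint j (by grind)) ha

lemma dotProduct_hfun_succ (hW : ∀ i, W i ≠ 0)
    (hdual : ∀ j ≤ K, ∀ i l, ∑ m, G j m i * W m * C j m l = if i = l then W l else 0)
    (hCk : ∀ j < K, ∀ m, C (j + 1) m (idx (j + 1)) = -C j m (idx (j + 1)))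
    (hfunint : ∀ j < K, ∀ i, hfun (j + 1) i * W (idx (j + 1)) = W i * C j i (idx (j + 1)))
    {t : ℕ} (ht : t < K) (i : Fin n) :
    (fun m => G (t + 1) m i) ⬝ᵥ hfun (t + 1) = if i = idx (t + 1) then -1 else 0 := by
  refine dotProduct_eq_of_mul_eq (hW _) (hfunint t ht) ?_
  have := hdual (t + 1) ht i (idx (t + 1))
  simp only [hCk t ht, mul_neg, sum_neg_distrib] at this
  split_ifs at this ⊢ <;> linarith

lemma eq_exchangePolynomial_guptaMonomial (hW : ∀ i, W i ≠ 0)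
    (hfunint : ∀ j < K, ∀ i, hfun (j + 1) i * W (idx (j + 1)) = W i * C j i (idx (j + 1)))
    (e : ℕ → ℕ → ℤ)
    (he : ∀ l, 1 ≤ l → l ≤ K → ∀ j, 1 ≤ j → j ≤ l →
      e l j * W (idx j) =
        ∑ m, B₀.mulVec (fun i => ε l * C (l - 1) i (idx l)) m * W m * C (j - 1) m (idx j))
    (hL1 : L 1 = ∑ s ∈ range (r (idx 1) + 1),
      Zc r (idx 1) s * yhatpow r B₀ (fun i => ε 1 * C 0 i (idx 1)) ^ s)
    (hLl : ∀ l, 2 ≤ l → l ≤ K → L l = ∑ s ∈ range (r (idx l) + 1),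
      Zc r (idx l) s * (yhatpow r B₀ (fun i => ε l * C (l - 1) i (idx l)) *
        ∏ j ∈ Icc 1 (l - 1), L j ^ (-(e l j))) ^ s)
    {t : ℕ} (ht : t < K) :
    L (t + 1) = exchangePolynomial r (idx (t + 1))
      ((∏ l, Yv l ^ (ε (t + 1) * C t l (idx (t + 1)))) *
        guptaMonomial (Icc 1 t) L hfun (B₀ *ᵥ fun l => ε (t + 1) * C t l (idx (t + 1)))) := by
  have hmon : yhatpow r B₀ (fun l => ε (t + 1) * C t l (idx (t + 1))) *
        ∏ j ∈ Icc 1 t, L j ^ (-(e (t + 1) j)) =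
      (∏ l, Yv l ^ (ε (t + 1) * C t l (idx (t + 1)))) *
        guptaMonomial (Icc 1 t) L hfun (B₀ *ᵥ fun l => ε (t + 1) * C t l (idx (t + 1))) := by
    rw [yhatpow_eq, mul_assoc, guptaMonomial]
    congr 2
    refine prod_congr rfl fun j hj => ?_
    have hj' := mem_Icc.1 hj
    have he' := he (t + 1) (by omega) ht j hj'.1 (by omega)
    rw [Nat.add_sub_cancel] at he'
    rw [dotProduct_hfun_eq hW hfunint (mem_Icc.2 ⟨hj'.1, by omega⟩) he']
  rw [exchangePolynomial, ← hmon]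
  rcases Nat.eq_zero_or_pos t with rfl | htpos
  · simp [hL1]
  · simpa using hLl (t + 1) (by omega) ht

lemma map_Xv_eq_guptaMonomial {μ M : ℕ → (GF n r →+* GF n r)}
    (hM0 : M 0 = RingHom.id _) (hM : ∀ j < K, M (j + 1) = (M j).comp (μ (j + 1)))
    (hMy : ∀ t ≤ K, ∀ i, M t (Yv i) = Yv i) (hMz : ∀ t ≤ K, ∀ i s, M t (Zc r i s) = Zc r i s)
    (hμx : ∀ j < K, ∀ i, i ≠ idx (j + 1) → μ (j + 1) (Xv i) = Xv i)
    (hμxk : ∀ j < K, μ (j + 1) (Xv (idx (j + 1))) =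
      (Xv (idx (j + 1)) : GF n r)⁻¹ *
        (∏ l, Xv (r := r) l ^ max (-(ε (j + 1) * B j l (idx (j + 1)))) 0) ^ (r (idx (j + 1))) *
        ∑ s ∈ range (r (idx (j + 1)) + 1),
          Zc r (idx (j + 1)) s *
            ((∏ l, Yv (r := r) l ^ C j l (idx (j + 1))) *
              ∏ l, Xv (r := r) l ^ B j l (idx (j + 1))) ^ (ε (j + 1) * s))
    (hG0 : G 0 = 1)
    (hG : ∀ j < K, G (j + 1) = G j * mutE (r (idx (j + 1))) (ε (j + 1)) (idx (j + 1)) (B j))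
    (hGB : ∀ t ≤ K, G t * B t = B₀ * C t)
    (hL : ∀ t < K, L (t + 1) = exchangePolynomial r (idx (t + 1))
      ((∏ l, Yv l ^ (ε (t + 1) * C t l (idx (t + 1)))) *
        guptaMonomial (Icc 1 t) L hfun (B₀ *ᵥ fun l => ε (t + 1) * C t l (idx (t + 1)))))
    (hpair : ∀ t < K, ∀ i,
      (fun m => G (t + 1) m i) ⬝ᵥ hfun (t + 1) = if i = idx (t + 1) then -1 else 0) :
    ∀ t ≤ K, (∀ j ∈ Icc 1 t, L j ≠ 0) ∧
      ∀ i, M t (Xv i) = guptaMonomial (Icc 1 t) L hfun (fun m => G t m i) := by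
  intro t
  induction t with
  | zero =>
    intro _
    refine ⟨by simp, fun i => ?_⟩
    rw [hM0, hG0, RingHom.id_apply, guptaMonomial, xpow, prod_eq_single i (by simp_all) (by simp)]
    simp
  | succ t ih =>
    intro ht
    obtain ⟨hLt, hXt⟩ := ih (by omega)
    have hGk : (fun m => G (t + 1) m (idx (t + 1))) = -(fun m => G t m (idx (t + 1))) +
        (r (idx (t + 1)) : ℤ) • G t *ᵥ fun l => max (-(ε (t + 1) * B t l (idx (t + 1)))) 0 := by
      ext m
      simp [hG t ht, mul_mutE_apply, Matrix.mulVec, dotProduct, mul_comm]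
    have hxk : M (t + 1) (Xv (idx (t + 1))) =
        guptaMonomial (Icc 1 t) L hfun (fun m => G (t + 1) m (idx (t + 1))) * L (t + 1) := by
      rw [hM t ht, RingHom.comp_apply, hμxk t ht, map_exchange_relation hLt hXt (hMy t (by omega))
        (hMz t (by omega) (idx (t + 1))) (hGB t (by omega)), hGk, hL t ht]
    refine ⟨fun j hj => ?_, fun i => ?_⟩
    · rcases (mem_Icc.1 hj).2.lt_or_eq with hjt | rfl
      · exact hLt j (mem_Icc.2 ⟨(mem_Icc.1 hj).1, by omega⟩)
      · intro h0
        exact Xv_ne_zero _ ((M (t + 1)).injective (by rw [hxk, h0, mul_zero, map_zero]))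
    · rw [guptaMonomial_Icc_succ, hpair t ht i]
      by_cases hi : i = idx (t + 1)
      · rw [if_pos hi, hi, hxk]
        simp
      · have hGi : (fun m => G (t + 1) m i) = fun m => G t m i := by
          ext m
          simp [hG t ht, mul_mutE_apply, hi]
        rw [if_neg hi, hM t ht, RingHom.comp_apply, hμx t ht i hi, hXt i, hGi]
        simp

end Gupta

theorem stmt_14_general (n K : ℕ) (r : Fin n → ℕ) (hr : ∀ i, 0 < r i)
    (B₀ : Matrix (Fin n) (Fin n) ℤ)
    (D₀ : Fin n → ℤ) (hD₀ : ∀ i, 0 < D₀ i)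
    (hskew : ∀ i j, D₀ i * (r i : ℤ) * B₀ i j = -(D₀ j * (r j : ℤ) * B₀ j i))
    (idx : ℕ → Fin n) (ε : ℕ → ℤ)
    (hε : ∀ j < K, ε (j + 1) = 1 ∨ ε (j + 1) = -1)
    (B C G : ℕ → Matrix (Fin n) (Fin n) ℤ)
    (hB0 : B 0 = B₀) (hC0 : C 0 = 1) (hG0 : G 0 = 1)
    -- at each step the c-vector is nonzero and sign-coherent with common sign ε_j
    (hcv : ∀ j < K, (∃ l, C j l (idx (j + 1)) ≠ 0) ∧
      ∀ l, 0 ≤ ε (j + 1) * C j l (idx (j + 1)))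
    (hB : ∀ j < K, ∀ (a b : Fin n),
      B (j + 1) a b =
        if a = idx (j + 1) ∨ b = idx (j + 1) then -(B j a b)
        else B j a b + (r (idx (j + 1)) : ℤ) *
          (max (-(B j a (idx (j + 1)))) 0 * B j (idx (j + 1)) b
            + B j a (idx (j + 1)) * max (B j (idx (j + 1)) b) 0))
    (hC : ∀ j < K, ∀ (a b : Fin n),
      C (j + 1) a b =
        if b = idx (j + 1) then -(C j a b)
        else C j a b + (r (idx (j + 1)) : ℤ) *
          (C j a (idx (j + 1)) * max (ε (j + 1) * B j (idx (j + 1)) b) 0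
            + max (-(ε (j + 1) * C j a (idx (j + 1)))) 0 * B j (idx (j + 1)) b))
    (hG : ∀ j < K, ∀ (l i : Fin n),
      G (j + 1) l i =
        if i = idx (j + 1) then
          -(G j l i) + (r (idx (j + 1)) : ℤ) *
            ∑ p, max (-(ε (j + 1) * B j p (idx (j + 1)))) 0 * G j l p
        else G j l i)
    -- tropical duality
    (hdual : ∀ j ≤ K, ∀ (i l : Fin n),
      ∑ m, G j m i * (D₀ m * (r m : ℤ)) * C j m l =
        if i = l then D₀ l * (r l : ℤ) else 0)
    -- the rational numbers h_{i,j} = (e_i, d_{(j)}·c_j)_{D₀R} are integers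
    (hfun : ℕ → Fin n → ℤ)
    (hfunint : ∀ j < K, ∀ i,
      hfun (j + 1) i * (D₀ (idx (j + 1)) * (r (idx (j + 1)) : ℤ)) =
        D₀ i * (r i : ℤ) * C j i (idx (j + 1)))
    (μ : ℕ → (GF n r →+* GF n r))
    (hμy : ∀ j < K, ∀ i, μ (j + 1) (Yv i) = Yv i)
    (hμz : ∀ j < K, ∀ i s, μ (j + 1) (Zv i s) = Zv i s)
    (hμx : ∀ j < K, ∀ i, i ≠ idx (j + 1) → μ (j + 1) (Xv i) = Xv i)
    (hμxk : ∀ j < K, μ (j + 1) (Xv (idx (j + 1))) =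
      (Xv (idx (j + 1)) : GF n r)⁻¹ *
        (∏ l, Xv (r := r) l ^ max (-(ε (j + 1) * B j l (idx (j + 1)))) 0) ^ (r (idx (j + 1))) *
        ∑ s ∈ Finset.range (r (idx (j + 1)) + 1),
          Zc r (idx (j + 1)) s *
            ((∏ l, Yv (r := r) l ^ C j l (idx (j + 1))) *
              ∏ l, Xv (r := r) l ^ B j l (idx (j + 1))) ^ (ε (j + 1) * s))
    (M : ℕ → (GF n r →+* GF n r))
    (hM0 : M 0 = RingHom.id _)
    (hM : ∀ j < K, M (j + 1) = (M j).comp (μ (j + 1)))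
    -- the rational numbers (ĉ_l⁺, d_{(j)}·c_j)_{D₀R} are integers `e l j`
    (e : ℕ → ℕ → ℤ)
    (he : ∀ l, 1 ≤ l → l ≤ K → ∀ j, 1 ≤ j → j ≤ l →
      e l j * (D₀ (idx j) * (r (idx j) : ℤ)) =
        ∑ m, B₀.mulVec (fun i => ε l * C (l - 1) i (idx l)) m *
          (D₀ m * (r m : ℤ)) * C (j - 1) m (idx j))
    (L : ℕ → GF n r)
    (hL1 : L 1 = ∑ s ∈ Finset.range (r (idx 1) + 1),
      Zc r (idx 1) s * yhatpow r B₀ (fun i => ε 1 * C 0 i (idx 1)) ^ s)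
    (hLl : ∀ l, 2 ≤ l → l ≤ K → L l = ∑ s ∈ Finset.range (r (idx l) + 1),
      Zc r (idx l) s * (yhatpow r B₀ (fun i => ε l * C (l - 1) i (idx l)) *
        ∏ j ∈ Finset.Icc 1 (l - 1), L j ^ (-(e l j))) ^ s)
    -- the rational numbers (g_K, d_{(j)}·c_j)_{D₀R} are integers `hg j`
    (hg : ℕ → ℤ)
    (hgint : ∀ j, 1 ≤ j → j ≤ K →
      hg j * (D₀ (idx j) * (r (idx j) : ℤ)) =
        ∑ m, G K m (idx K) * (D₀ m * (r m : ℤ)) * C (j - 1) m (idx j))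
    : (∀ j, 1 ≤ j → j ≤ K → L j ≠ 0) ∧
    M K (Xv (idx K)) =
      xpow r (fun m => G K m (idx K)) * ∏ j ∈ Finset.Icc 1 K, L j ^ (-(hg j)) := by
  have hW : ∀ i, 0 < D₀ i * (r i : ℤ) := fun i => mul_pos (hD₀ i) (by exact_mod_cast hr i)
  have hW0 : ∀ i, D₀ i * (r i : ℤ) ≠ 0 := fun i => (hW i).ne'
  have hGm : ∀ j < K, G (j + 1) = G j * mutE (r (idx (j + 1))) (ε (j + 1)) (idx (j + 1)) (B j) :=
    fun j hj => Matrix.ext fun l i => (hG j hj l i).trans (mul_mutE_apply ..).symm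
  have hGB := mul_eq_mul_of_mutations (ρ := fun j => (r (idx j) : ℤ)) hW (hB0 ▸ hskew)
    (by rw [hB0, hC0, hG0, Matrix.one_mul, Matrix.mul_one]) hε (fun j hj => (hcv j hj).2)
    (fun j hj => Matrix.ext (hB j hj)) hC hGm
  have hCk : ∀ j < K, ∀ m, C (j + 1) m (idx (j + 1)) = -C j m (idx (j + 1)) := fun j hj m => by
    simp [hC j hj]
  obtain ⟨hLne, hMX⟩ := map_Xv_eq_guptaMonomial hM0 hM
    (fun t ht i => map_eq_self_of_comp hM0 hM (hμy · · i) t ht)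
    (fun t ht => map_Zc fun i s => map_eq_self_of_comp hM0 hM (hμz · · i s) t ht)
    hμx hμxk hG0 hGm hGB
    (fun t ht => eq_exchangePolynomial_guptaMonomial hW0 hfunint e he hL1 hLl ht)
    (fun t ht => dotProduct_hfun_succ hW0 hdual hCk hfunint ht) K le_rfl
  refine ⟨fun j h1 h2 => hLne j (mem_Icc.2 ⟨h1, h2⟩), ?_⟩
  rw [hMX, guptaMonomial]
  congr 1
  refine prod_congr rfl fun j hj => ?_
  rw [dotProduct_hfun_eq hW0 hfunint hj (hgint j (mem_Icc.1 hj).1 (mem_Icc.1 hj).2)]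

/-- **Gupta's formula for generalized cluster algebras.** The cluster
variable `x_{i_K;t_K}` of the generalized cluster algebra with principal coefficients,
expressed in the initial variables as `μ^{(K)}(x_{i_K})`, satisfies
`μ^{(K)}(x_{i_K}) = x^{g_K}·∏_{j=1}^{K} L_j^{-(g_K, d_{(j)}·c_j)_{D₀R}}`
(and the `L_j` are nonzero); equivalently, the `F`-polynomial evaluated at `(ŷ, z)`
equals `∏_{j=1}^{K} L_j^{-(g_K, d_{(j)}·c_j)_{D₀R}}`. -/
theorem stmt_14 (n K : ℕ) (hn : 1 ≤ n) (r : Fin n → ℕ) (hr : ∀ i, 0 < r i)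
    (B₀ : Matrix (Fin n) (Fin n) ℤ)
    (D₀ : Fin n → ℤ) (hD₀ : ∀ i, 0 < D₀ i)
    (hskew : ∀ i j, D₀ i * (r i : ℤ) * B₀ i j = -(D₀ j * (r j : ℤ) * B₀ j i))
    (idx : ℕ → Fin n) (ε : ℕ → ℤ)
    (hε : ∀ j < K, ε (j + 1) = 1 ∨ ε (j + 1) = -1)
    (B C G : ℕ → Matrix (Fin n) (Fin n) ℤ)
    (hB0 : B 0 = B₀) (hC0 : C 0 = 1) (hG0 : G 0 = 1)
    -- at each step the c-vector is nonzero and sign-coherent with common sign ε_j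
    (hcv : ∀ j < K, (∃ l, C j l (idx (j + 1)) ≠ 0) ∧
      ∀ l, 0 ≤ ε (j + 1) * C j l (idx (j + 1)))
    (hB : ∀ j < K, ∀ (a b : Fin n),
      B (j + 1) a b =
        if a = idx (j + 1) ∨ b = idx (j + 1) then -(B j a b)
        else B j a b + (r (idx (j + 1)) : ℤ) *
          (max (-(B j a (idx (j + 1)))) 0 * B j (idx (j + 1)) b
            + B j a (idx (j + 1)) * max (B j (idx (j + 1)) b) 0))
    (hC : ∀ j < K, ∀ (a b : Fin n),
      C (j + 1) a b =
        if b = idx (j + 1) then -(C j a b)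
        else C j a b + (r (idx (j + 1)) : ℤ) *
          (C j a (idx (j + 1)) * max (ε (j + 1) * B j (idx (j + 1)) b) 0
            + max (-(ε (j + 1) * C j a (idx (j + 1)))) 0 * B j (idx (j + 1)) b))
    (hG : ∀ j < K, ∀ (l i : Fin n),
      G (j + 1) l i =
        if i = idx (j + 1) then
          -(G j l i) + (r (idx (j + 1)) : ℤ) *
            ∑ p, max (-(ε (j + 1) * B j p (idx (j + 1)))) 0 * G j l p
        else G j l i)
    -- tropical duality
    (hdual : ∀ j ≤ K, ∀ (i l : Fin n),
      ∑ m, G j m i * (D₀ m * (r m : ℤ)) * C j m l =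
        if i = l then D₀ l * (r l : ℤ) else 0)
    -- the rational numbers h_{i,j} = (e_i, d_{(j)}·c_j)_{D₀R} are integers
    (hfun : ℕ → Fin n → ℤ)
    (hfunint : ∀ j < K, ∀ i,
      hfun (j + 1) i * (D₀ (idx (j + 1)) * (r (idx (j + 1)) : ℤ)) =
        D₀ i * (r i : ℤ) * C j i (idx (j + 1)))
    (μ : ℕ → (GF n r →+* GF n r))
    (hμ0 : ∀ j < K, ∀ a : ℚ, μ (j + 1) (Qc a) = Qc a)
    (hμy : ∀ j < K, ∀ i, μ (j + 1) (Yv i) = Yv i)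
    (hμz : ∀ j < K, ∀ i s, μ (j + 1) (Zv i s) = Zv i s)
    (hμx : ∀ j < K, ∀ i, i ≠ idx (j + 1) → μ (j + 1) (Xv i) = Xv i)
    (hμxk : ∀ j < K, μ (j + 1) (Xv (idx (j + 1))) =
      (Xv (idx (j + 1)) : GF n r)⁻¹ *
        (∏ l, Xv (r := r) l ^ max (-(ε (j + 1) * B j l (idx (j + 1)))) 0) ^ (r (idx (j + 1))) *
        ∑ s ∈ Finset.range (r (idx (j + 1)) + 1),
          Zc r (idx (j + 1)) s *
            ((∏ l, Yv (r := r) l ^ C j l (idx (j + 1))) *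
              ∏ l, Xv (r := r) l ^ B j l (idx (j + 1))) ^ (ε (j + 1) * s))
    (M : ℕ → (GF n r →+* GF n r))
    (hM0 : M 0 = RingHom.id _)
    (hM : ∀ j < K, M (j + 1) = (M j).comp (μ (j + 1)))
    -- the rational numbers (ĉ_l⁺, d_{(j)}·c_j)_{D₀R} are integers `e l j`
    (e : ℕ → ℕ → ℤ)
    (he : ∀ l, 1 ≤ l → l ≤ K → ∀ j, 1 ≤ j → j ≤ l →
      e l j * (D₀ (idx j) * (r (idx j) : ℤ)) =
        ∑ m, B₀.mulVec (fun i => ε l * C (l - 1) i (idx l)) m *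
          (D₀ m * (r m : ℤ)) * C (j - 1) m (idx j))
    (L : ℕ → GF n r)
    (hL1 : L 1 = ∑ s ∈ Finset.range (r (idx 1) + 1),
      Zc r (idx 1) s * yhatpow r B₀ (fun i => ε 1 * C 0 i (idx 1)) ^ s)
    (hLl : ∀ l, 2 ≤ l → l ≤ K → L l = ∑ s ∈ Finset.range (r (idx l) + 1),
      Zc r (idx l) s * (yhatpow r B₀ (fun i => ε l * C (l - 1) i (idx l)) *
        ∏ j ∈ Finset.Icc 1 (l - 1), L j ^ (-(e l j))) ^ s)
    -- the rational numbers (g_K, d_{(j)}·c_j)_{D₀R} are integers `hg j`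
    (hK : 1 ≤ K) (hg : ℕ → ℤ)
    (hgint : ∀ j, 1 ≤ j → j ≤ K →
      hg j * (D₀ (idx j) * (r (idx j) : ℤ)) =
        ∑ m, G K m (idx K) * (D₀ m * (r m : ℤ)) * C (j - 1) m (idx j))
    : (∀ j, 1 ≤ j → j ≤ K → L j ≠ 0) ∧
    M K (Xv (idx K)) =
      xpow r (fun m => G K m (idx K)) * ∏ j ∈ Finset.Icc 1 K, L j ^ (-(hg j)) :=
  stmt_14_general n K r hr B₀ D₀ hD₀ hskew idx ε hε B C G hB0 hC0 hG0 hcv hB hC hG hdual hfun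
    hfunint μ hμy hμz hμx hμxk M hM0 hM e he L hL1 hLl hg hgint
end
end
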